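/- arXiv:2407.18619 — 3 statements merged into one kernel-verified Lean document; each statement's English description precedes it below -/
import Mathlib

section
/- Let a > 0, b ≥ 0, and let w : [0,∞) → ℝ be twice continuously differentiable with w(0) = 1, and suppose w''(t) + a·w(t) ≤ b for all t ≥ 0. If 2b ≤ a and w'(0) ≤ 0, then there exists t ∈ [0, π/√a] with w(t) ≤ 0. -/
/-! Let `s = √a` and `v = w - b/a`, so that `v'' + s² v ≤ 0`. The Wronskian
`W = sin(s t) v' - s cos(s t) v` of `v` and `sin(s t)` has derivative `sin(s t) (v'' + s² v)`,
which is `≤ 0` on `[0, π/s]`; comparing `W` at the endpoints gives `v(π/s) ≤ -v(0)`, that is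
`w(π/s) ≤ 2b/a - 1 ≤ 0`. -/

open Real Set

theorem hasDerivAt_sin_wronskian {v v' v'' : ℝ → ℝ} {t : ℝ} (s : ℝ)
    (hv : HasDerivAt v (v' t) t) (hv' : HasDerivAt v' (v'' t) t) :
    HasDerivAt (fun x => sin (s * x) * v' x - s * cos (s * x) * v x)
      (sin (s * t) * (v'' t + s ^ 2 * v t)) t := by
  have hlin : HasDerivAt (fun x => s * x) s t := by
    simpa using (hasDerivAt_id t).const_mul s
  refine ((hlin.sin.fun_mul hv').fun_sub ((hlin.cos.const_mul s).fun_mul hv)).congr_deriv ?_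
  ring

theorem add_apply_pi_div_nonpos_of_deriv2_add_sq_mul_nonpos {v v' v'' : ℝ → ℝ} {s : ℝ}
    (hs : 0 < s) (hv : ∀ t, HasDerivAt v (v' t) t) (hv' : ∀ t, HasDerivAt v' (v'' t) t)
    (hineq : ∀ t ∈ Ioo 0 (π / s), v'' t + s ^ 2 * v t ≤ 0) :
    v (π / s) + v 0 ≤ 0 := by
  have hT : 0 ≤ π / s := by positivity
  have hW t := hasDerivAt_sin_wronskian s (hv t) (hv' t)
  have hanti : AntitoneOn (fun x => sin (s * x) * v' x - s * cos (s * x) * v x) (Icc 0 (π / s)) := by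
    refine antitoneOn_of_hasDerivWithinAt_nonpos (convex_Icc _ _)
      (fun x _ => (hW x).continuousAt.continuousWithinAt) (fun x _ => (hW x).hasDerivWithinAt) ?_
    rw [interior_Icc]
    intro x hx
    have hsx : s * x ≤ π := by
      calc s * x ≤ s * (π / s) := by gcongr; exact hx.2.le
        _ = π := mul_div_cancel₀ _ hs.ne'
    exact mul_nonpos_of_nonneg_of_nonpos
      (sin_nonneg_of_nonneg_of_le_pi (by nlinarith [hx.1]) hsx) (hineq x hx)
  have hends := hanti (left_mem_Icc.mpr hT) (right_mem_Icc.mpr hT) hT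
  simp only [mul_div_cancel₀ _ hs.ne', mul_zero, sin_pi, cos_pi, sin_zero, cos_zero] at hends
  nlinarith

theorem stmt1_general (a b : ℝ) (ha : 0 < a) (w : ℝ → ℝ)
    (hw : ContDiff ℝ 2 w) (hw0 : w 0 = 1)
    (hineq : ∀ t ≥ (0:ℝ), deriv (deriv w) t + a * w t ≤ b)
    (hba : 2 * b ≤ a) :
    ∃ t ∈ Set.Icc (0:ℝ) (Real.pi / Real.sqrt a), w t ≤ 0 := by
  have hs2 : √a ^ 2 = a := sq_sqrt ha.le
  have hwd : Differentiable ℝ w := hw.differentiable (by norm_num)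
  have hw'd : Differentiable ℝ (deriv w) :=
    ((contDiff_succ_iff_deriv (n := 1)).mp hw).2.2.differentiable (by norm_num)
  have hv := add_apply_pi_div_nonpos_of_deriv2_add_sq_mul_nonpos (v := fun t => w t - b / a)
    (sqrt_pos.mpr ha) (fun t => (hwd t).hasDerivAt.sub_const _) (fun t => (hw'd t).hasDerivAt)
    (fun t ht => by
      rw [hs2, mul_sub, mul_div_cancel₀ _ ha.ne']
      linarith [hineq t ht.1.le])
  have hba' : 2 * (b / a) ≤ 1 := by
    rw [← mul_div_assoc, div_le_one ha]; exact hba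
  refine ⟨π / √a, ⟨by positivity, le_rfl⟩, ?_⟩
  rw [hw0] at hv
  linarith

theorem stmt1 (a b : ℝ) (ha : 0 < a) (hb : 0 ≤ b) (w : ℝ → ℝ)
    (hw : ContDiff ℝ 2 w) (hw0 : w 0 = 1)
    (hineq : ∀ t ≥ (0:ℝ), deriv (deriv w) t + a * w t ≤ b)
    (hba : 2 * b ≤ a) (hw'0 : deriv w 0 ≤ 0) :
    ∃ t ∈ Set.Icc (0:ℝ) (Real.pi / Real.sqrt a), w t ≤ 0 :=
  stmt1_general a b ha w hw hw0 hineq hba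
end

section
/- Suppose ρ, v, B are smooth with ρ > 0, B → 1 and v → 0 as |x| → ∞, satisfying B_x = −ρv and v_x = ρ − B, and all relevant integrals finite. Then ∫_ℝ (ρ − B)(B − 1)² dx = 2∫_ℝ ρv²(B − 1) dx. -/
open MeasureTheory Filter

theorem stmt13 (ρ v B : ℝ → ℝ)
    (hρ : ContDiff ℝ (⊤ : ℕ∞) ρ) (hv : ContDiff ℝ (⊤ : ℕ∞) v) (hB : ContDiff ℝ (⊤ : ℕ∞) B)
    (hρpos : ∀ x, 0 < ρ x)
    (hBtop : Filter.Tendsto B Filter.atTop (nhds 1))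
    (hBbot : Filter.Tendsto B Filter.atBot (nhds 1))
    (hvtop : Filter.Tendsto v Filter.atTop (nhds 0))
    (hvbot : Filter.Tendsto v Filter.atBot (nhds 0))
    (hBx : ∀ x, deriv B x = -(ρ x * v x))
    (hvx : ∀ x, deriv v x = ρ x - B x)
    (hI1 : MeasureTheory.Integrable (fun x => (ρ x - B x) * (B x - 1) ^ 2))
    (hI2 : MeasureTheory.Integrable (fun x => ρ x * (v x) ^ 2 * (B x - 1))) :
    ∫ x, (ρ x - B x) * (B x - 1) ^ 2 =
      2 * ∫ x, ρ x * (v x) ^ 2 * (B x - 1) := by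
  set F : ℝ → ℝ := fun x => v x * (B x - 1) ^ 2 with hF
  have hdB : ∀ x, HasDerivAt B (-(ρ x * v x)) x := fun x => by
    simpa [hBx x] using (hB.differentiable (by simp) x).hasDerivAt
  have hdv : ∀ x, HasDerivAt v (ρ x - B x) x := fun x => by
    simpa [hvx x] using (hv.differentiable (by simp) x).hasDerivAt
  have hdF : ∀ x, HasDerivAt F
      ((ρ x - B x) * (B x - 1) ^ 2 - 2 * (ρ x * v x ^ 2 * (B x - 1))) x := by
    intro x
    have h := (hdv x).mul (((hdB x).sub_const 1).pow 2)
    refine HasDerivAt.congr_deriv (f := F) h ?_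
    simp only [Pi.pow_apply, Nat.cast_ofNat]
    ring
  have hint : Integrable (fun x =>
      (ρ x - B x) * (B x - 1) ^ 2 - 2 * (ρ x * v x ^ 2 * (B x - 1))) :=
    hI1.sub (hI2.const_mul 2)
  have hFtop : Tendsto F atTop (nhds 0) := by
    have := hvtop.mul ((hBtop.sub_const 1).pow 2)
    simpa using this
  have hFbot : Tendsto F atBot (nhds 0) := by
    have := hvbot.mul ((hBbot.sub_const 1).pow 2)
    simpa using this
  have h0 : ∫ x, ((ρ x - B x) * (B x - 1) ^ 2 - 2 * (ρ x * v x ^ 2 * (B x - 1))) = 0 := by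
    have := integral_of_hasDerivAt_of_tendsto hdF hint hFbot hFtop
    simpa using this
  have := integral_sub hI1 (hI2.const_mul 2)
  rw [h0] at this
  rw [integral_const_mul] at this
  linarith [this]
end

section
/- Let h₀ ∈ [0, 1) and suppose ρ₀ > 0 satisfies ρ₀ < (1 − h₀)²/(2(1 + h₀)). Let B : [0,∞) → ℝ and v : [0,∞) → ℝ be continuous with |B(t) − 1| ≤ h₀ for all t. If w is C² with w(0) = 1, w'(0) = 0, and w''(t) + B(t)²w(t) = B(t)ρ₀ − v(t)²ρ₀ while w(t) ≥ 0, then there exists T ≤ π/(1 − h₀) with w(T) ≤ 0. -/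
/-!
Sturm comparison with the constant-coefficient oscillator `u'' + c² u = M`, `c = 1 - h₀`,
`M = (1 + h₀) ρ₀`. While `w ≥ 0` the equation gives `w'' + c² w ≤ M`, and the
Wronskian-type quantity `c w' sin (c t) - (c² w - M) cos (c t)` then decreases on `[0, π / c]`.
Comparing its endpoint values yields `c² (w 0 + w (π / c)) ≤ 2 M < c²`, so `w` cannot stay
positive up to `π / c`.
-/

open Real

lemma mul_sub_sq_mul_le_of_abs_sub_one_le {h ρ b v w : ℝ} (hh : h ≤ 1) (hb : |b - 1| ≤ h)
    (hρ : 0 ≤ ρ) (hw : 0 ≤ w) :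
    b * ρ - v ^ 2 * ρ - b ^ 2 * w ≤ (1 + h) * ρ - (1 - h) ^ 2 * w := by
  obtain ⟨hb₁, hb₂⟩ := abs_le.mp hb
  have hsq : (1 - h) ^ 2 ≤ b ^ 2 := pow_le_pow_left₀ (by linarith) (by linarith) 2
  nlinarith [mul_nonneg (sq_nonneg v) hρ, mul_le_mul_of_nonneg_right hsq hw]

lemma hasDerivAt_mul_deriv_mul_sin_sub_mul_cos (c M : ℝ) {w : ℝ → ℝ}
    (hw : Differentiable ℝ w) (hw' : Differentiable ℝ (deriv w)) (t : ℝ) :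
    HasDerivAt (fun s ↦ c * deriv w s * sin (c * s) - (c ^ 2 * w s - M) * cos (c * s))
      (c * (deriv (deriv w) t + c ^ 2 * w t - M) * sin (c * t)) t := by
  have hlin : HasDerivAt (fun s ↦ c * s) c t := by
    simpa using (hasDerivAt_id t).const_mul c
  have hsin := (hasDerivAt_sin (c * t)).comp t hlin
  have hcos := (hasDerivAt_cos (c * t)).comp t hlin
  have hw₁ := ((hw t).hasDerivAt.const_mul (c ^ 2)).sub_const M
  have hw₂ := (hw' t).hasDerivAt.const_mul c
  exact ((hw₂.mul hsin).sub (hw₁.mul hcos)).congr_deriv (by simp only [Function.comp_apply]; ring)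

theorem sq_mul_add_le_of_deriv_deriv_add_sq_mul_le {c M : ℝ} {w : ℝ → ℝ} (hc : 0 < c)
    (hw : ContDiff ℝ 2 w)
    (hineq : ∀ t ∈ Set.Ioo 0 (π / c), deriv (deriv w) t + c ^ 2 * w t ≤ M) :
    c ^ 2 * (w 0 + w (π / c)) ≤ 2 * M := by
  set g : ℝ → ℝ := fun s ↦ c * deriv w s * sin (c * s) - (c ^ 2 * w s - M) * cos (c * s)
  have hg := hasDerivAt_mul_deriv_mul_sin_sub_mul_cos c M (hw.differentiable two_ne_zero)
    hw.differentiable_deriv_two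
  have hgdiff : Differentiable ℝ g := fun t ↦ (hg t).differentiableAt
  have hL : 0 < π / c := div_pos pi_pos hc
  have hcL : c * (π / c) = π := mul_div_cancel₀ π hc.ne'
  have hanti : AntitoneOn g (Set.Icc 0 (π / c)) := by
    refine antitoneOn_of_deriv_nonpos (convex_Icc _ _) hgdiff.continuous.continuousOn
      hgdiff.differentiableOn fun t ht ↦ ?_
    rw [interior_Icc] at ht
    rw [(hg t).deriv]
    have hsin : 0 ≤ sin (c * t) := sin_nonneg_of_nonneg_of_le_pi (by nlinarith [ht.1])
      (hcL ▸ mul_le_mul_of_nonneg_left ht.2.le hc.le)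
    exact mul_nonpos_of_nonpos_of_nonneg
      (mul_nonpos_of_nonneg_of_nonpos hc.le (by linarith [hineq t ht])) hsin
  have hend := hanti (Set.left_mem_Icc.mpr hL.le) (Set.right_mem_Icc.mpr hL.le) hL.le
  simp only [g, hcL, mul_zero, sin_zero, cos_zero, sin_pi, cos_pi] at hend
  linarith

theorem stmt17_general (h₀ ρ₀ : ℝ) (hh0 : 0 ≤ h₀) (hh1 : h₀ < 1) (hρ : 0 < ρ₀)
    (hsmall : ρ₀ < (1 - h₀) ^ 2 / (2 * (1 + h₀)))
    (B v w : ℝ → ℝ)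
    (hBb : ∀ t ≥ (0:ℝ), |B t - 1| ≤ h₀)
    (hw : ContDiff ℝ 2 w) (hw0 : w 0 = 1)
    (hode : ∀ t ≥ (0:ℝ), 0 ≤ w t →
      deriv (deriv w) t + (B t) ^ 2 * w t = B t * ρ₀ - (v t) ^ 2 * ρ₀) :
    ∃ T ∈ Set.Icc (0:ℝ) (Real.pi / (1 - h₀)), w T ≤ 0 := by
  by_contra! hpos
  have hc : 0 < 1 - h₀ := by linarith
  have hcomp := sq_mul_add_le_of_deriv_deriv_add_sq_mul_le (M := (1 + h₀) * ρ₀) hc hw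
    fun t ht ↦ by
      have hwt := (hpos t (Set.Ioo_subset_Icc_self ht)).le
      have := mul_sub_sq_mul_le_of_abs_sub_one_le (v := v t) hh1.le (hBb t ht.1.le) hρ.le hwt
      linarith [hode t ht.1.le hwt]
  have hM : 2 * ((1 + h₀) * ρ₀) < (1 - h₀) ^ 2 := by
    rw [lt_div_iff₀ (by positivity)] at hsmall
    linarith
  have hwL := hpos _ (Set.right_mem_Icc.mpr (div_pos pi_pos hc).le)
  nlinarith [mul_pos (pow_pos hc 2) hwL]

theorem stmt17 (h₀ ρ₀ : ℝ) (hh0 : 0 ≤ h₀) (hh1 : h₀ < 1) (hρ : 0 < ρ₀)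
    (hsmall : ρ₀ < (1 - h₀) ^ 2 / (2 * (1 + h₀)))
    (B v w : ℝ → ℝ) (hB : Continuous B) (hv : Continuous v)
    (hBb : ∀ t ≥ (0:ℝ), |B t - 1| ≤ h₀)
    (hw : ContDiff ℝ 2 w) (hw0 : w 0 = 1) (hw'0 : deriv w 0 = 0)
    (hode : ∀ t ≥ (0:ℝ), 0 ≤ w t →
      deriv (deriv w) t + (B t) ^ 2 * w t = B t * ρ₀ - (v t) ^ 2 * ρ₀) :
    ∃ T ∈ Set.Icc (0:ℝ) (Real.pi / (1 - h₀)), w T ≤ 0 :=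
  stmt17_general h₀ ρ₀ hh0 hh1 hρ hsmall B v w hBb hw hw0 hode
end
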